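/- Let h be a diagonal symmetry of W and let (g_{ji})_{1≤j≤i≤n} in S be adapted to (W,h). Then for every 1 ≤ j ≤ n one has (y_j − x_j)(x_j − h_jx_j)·g_{jj} = −(y_j − x_j)·∇_jW(h·x,y) + (W̄^h_{j,j} − W̄^h_{j−1,j}) in S. -/
import Mathlib


noncomputable section
open MvPolynomial
open scoped Classical

variable {k : Type} [Field k] {n : ℕ}

/-- The `x`-variables of `S = k[x₁,…,xₙ,y₁,…,yₙ]` (the ring `MvPolynomial (Fin n ⊕ Fin n) k`,
where `Sum.inl i` is `xᵢ` and `Sum.inr i` is `yᵢ`). -/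
def Xv (i : Fin n) : MvPolynomial (Fin n ⊕ Fin n) k := X (Sum.inl i)

/-- The `y`-variables of `S`. -/
def Yv (i : Fin n) : MvPolynomial (Fin n ⊕ Fin n) k := X (Sum.inr i)

/-- `W̄^h_{j,i} = W(y₁,…,y_j, x_{j+1},…,x_i, h_{i+1}x_{i+1},…,hₙxₙ) ∈ S`,
with `j i : ℕ` running from `0` to `n` (1-based indexing of the variables). -/
def Wbar (h : Fin n → kˣ) (W : MvPolynomial (Fin n) k) (j i : ℕ) :
    MvPolynomial (Fin n ⊕ Fin n) k :=
  aeval (fun t : Fin n =>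
    if (t : ℕ) < j then Yv t else if (t : ℕ) < i then Xv t else (h t : k) • Xv t) W

/-- `xᵢ^h := xᵢ` if `hᵢ = 1`, and `0` otherwise. -/
def xh (h : Fin n → kˣ) (t : Fin n) : MvPolynomial (Fin n) k :=
  if h t = 1 then X t else 0

/-- `W̃^h_{j,i} = W(x₁^h,…,x_j^h, x_{j+1},…,x_i, h_{i+1}x_{i+1},…,hₙxₙ) ∈ R`. -/
def Wtil (h : Fin n → kˣ) (W : MvPolynomial (Fin n) k) (j i : ℕ) :
    MvPolynomial (Fin n) k :=
  aeval (fun t : Fin n =>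
    if (t : ℕ) < j then xh h t else if (t : ℕ) < i then X t else (h t : k) • X t) W

/-- The substitution `xᵢ ↦ hᵢxᵢ`, `yᵢ ↦ yᵢ` on `S`. -/
def substH (h : Fin n → kˣ) :
    MvPolynomial (Fin n ⊕ Fin n) k →ₐ[k] MvPolynomial (Fin n ⊕ Fin n) k :=
  aeval (Sum.elim (fun i => (h i : k) • Xv i) Yv)

/-- The inclusion `R = k[x] → S = k[x,y]`. -/
def toS : MvPolynomial (Fin n) k →ₐ[k] MvPolynomial (Fin n ⊕ Fin n) k :=
  aeval Xv

/-- `h` is a diagonal symmetry of `W`: `W(h₁x₁,…,hₙxₙ) = W`. -/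
def IsDiagSym (h : Fin n → kˣ) (W : MvPolynomial (Fin n) k) : Prop :=
  aeval (fun t : Fin n => (h t : k) • X t) W = W

/-- `nab j` is the difference quotient `∇_jW`, characterized by
`(y_j−x_j)·∇_jW = W(y₁,…,y_j,x_{j+1},…,xₙ) − W(y₁,…,y_{j−1},x_j,…,xₙ)`. -/
def IsNabla (W : MvPolynomial (Fin n) k)
    (nab : Fin n → MvPolynomial (Fin n ⊕ Fin n) k) : Prop :=
  ∀ j : Fin n, (Yv j - Xv j) * nab j =
    aeval (fun t : Fin n => if t ≤ j then Yv t else Xv t) W -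
    aeval (fun t : Fin n => if t < j then Yv t else Xv t) W

/-- The family `(g_{ji})_{1≤j≤i≤n}` in `S` is adapted to `(W,h)`. -/
def GAdapted (h : Fin n → kˣ) (W : MvPolynomial (Fin n) k)
    (g : Fin n → Fin n → MvPolynomial (Fin n ⊕ Fin n) k) : Prop :=
  (∀ j i : Fin n, j < i → h i ≠ 1 →
    (Yv j - Xv j) * (Xv i - (h i : k) • Xv i) * g j i =
      (Wbar h W ((j : ℕ)+1) ((i : ℕ)+1) - Wbar h W (j : ℕ) ((i : ℕ)+1)) -
      (Wbar h W ((j : ℕ)+1) (i : ℕ) - Wbar h W (j : ℕ) (i : ℕ))) ∧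
  (∀ j i : Fin n, j < i → h i = 1 →
    (Yv j - Xv j) * g j i =
      pderiv (Sum.inl i) (Wbar h W ((j : ℕ)+1) ((i : ℕ)+1)) -
      pderiv (Sum.inl i) (Wbar h W (j : ℕ) ((i : ℕ)+1))) ∧
  (∀ i : Fin n, h i ≠ 1 →
    (Yv i - Xv i) * (Yv i - (h i : k) • Xv i) * (Xv i - (h i : k) • Xv i) * g i i =
      (Xv i - (h i : k) • Xv i) * (Wbar h W ((i : ℕ)+1) ((i : ℕ)+1) - Wbar h W (i : ℕ) (i : ℕ)) -
      (Yv i - (h i : k) • Xv i) * (Wbar h W (i : ℕ) ((i : ℕ)+1) - Wbar h W (i : ℕ) (i : ℕ))) ∧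
  (∀ i : Fin n, h i = 1 →
    (Yv i - Xv i)^2 * g i i =
      (Wbar h W ((i : ℕ)+1) ((i : ℕ)+1) - Wbar h W (i : ℕ) (i : ℕ)) -
      (Yv i - Xv i) * pderiv (Sum.inl i) (Wbar h W (i : ℕ) ((i : ℕ)+1)))

/-- The family `(f_{ji})_{1≤j<i≤n}` in `R` is adapted to `(W,h)`. -/
def FAdapted (h : Fin n → kˣ) (W : MvPolynomial (Fin n) k)
    (f : Fin n → Fin n → MvPolynomial (Fin n) k) : Prop :=
  (∀ j i : Fin n, j < i → h j ≠ 1 → h i ≠ 1 →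
    (X j - (h j : k) • X j) * (X i - (h i : k) • X i) * f j i =
      (Wtil h W ((j : ℕ)+1) ((i : ℕ)+1) - Wtil h W (j : ℕ) ((i : ℕ)+1)) -
      (Wtil h W ((j : ℕ)+1) (i : ℕ) - Wtil h W (j : ℕ) (i : ℕ))) ∧
  (∀ j i : Fin n, j < i → h j ≠ 1 → h i = 1 →
    (X j - (h j : k) • X j) * f j i =
      pderiv i (Wtil h W ((j : ℕ)+1) ((i : ℕ)+1)) - pderiv i (Wtil h W (j : ℕ) ((i : ℕ)+1))) ∧
  (∀ j i : Fin n, j < i → h j = 1 → h i ≠ 1 →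
    (X i - (h i : k) • X i) * f j i =
      (pderiv j (Wtil h W ((j : ℕ)+1) ((i : ℕ)+1)) - pderiv j (Wtil h W ((j : ℕ)+1) (i : ℕ))) -
      (pderiv j (Wtil h W (i : ℕ) (i : ℕ)) - pderiv j (Wtil h W ((i : ℕ)+1) ((i : ℕ)+1)))) ∧
  (∀ j i : Fin n, j < i → h j = 1 → h i = 1 → f j i = 0)

/- STATEMENT 13: if `h` is a diagonal symmetry of `W` and `(g_{ji})` is adapted to `(W,h)`,
then for every `1 ≤ j ≤ n`, in `S`:
`(y_j − x_j)(x_j − h_jx_j)·g_{jj} = −(y_j − x_j)·∇_jW(h·x,y) + (W̄^h_{j,j} − W̄^h_{j−1,j})`. -/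
lemma substH_Xv (h : Fin n → kˣ) (i : Fin n) :
    substH h (Xv i : MvPolynomial (Fin n ⊕ Fin n) k) = (h i : k) • Xv i := by
  simp [substH, Xv, aeval_X]

lemma substH_Yv (h : Fin n → kˣ) (i : Fin n) :
    substH h (Yv i : MvPolynomial (Fin n ⊕ Fin n) k) = Yv i := by
  simp [substH, Yv, aeval_X]

lemma key_nabla (W : MvPolynomial (Fin n) k) (h : Fin n → kˣ)
    (nab : Fin n → MvPolynomial (Fin n ⊕ Fin n) k) (hnab : IsNabla W nab) (j : Fin n) :
    (Yv j - (h j : k) • Xv j) * substH h (nab j) =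
      Wbar h W ((j : ℕ)+1) ((j : ℕ)+1) - Wbar h W (j : ℕ) (j : ℕ) := by
  have H := congrArg (substH h) (hnab j)
  rw [map_mul, map_sub, map_sub, substH_Xv, substH_Yv,
    comp_aeval_apply, comp_aeval_apply] at H
  have e1 : (fun t => substH h (if t ≤ j then Yv t else Xv t)) =
      (fun t : Fin n => if (t : ℕ) < (j : ℕ) + 1 then (Yv t : MvPolynomial (Fin n ⊕ Fin n) k)
        else if (t : ℕ) < (j : ℕ) + 1 then Xv t else (h t : k) • Xv t) := by
    funext t
    by_cases ht : t ≤ j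
    · rw [if_pos ht, if_pos (Nat.lt_succ_iff.mpr (Fin.le_def.mp ht)), substH_Yv]
    · have h3 : (j : ℕ) < (t : ℕ) := Fin.lt_def.mp (lt_of_not_ge ht)
      have h2 : ¬ ((t : ℕ) < (j : ℕ) + 1) := by omega
      rw [if_neg ht, if_neg h2, if_neg h2, substH_Xv]
  have e2 : (fun t => substH h (if t < j then Yv t else Xv t)) =
      (fun t : Fin n => if (t : ℕ) < (j : ℕ) then (Yv t : MvPolynomial (Fin n ⊕ Fin n) k)
        else if (t : ℕ) < (j : ℕ) then Xv t else (h t : k) • Xv t) := by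
    funext t
    by_cases ht : t < j
    · rw [if_pos ht, if_pos (Fin.lt_def.mp ht), substH_Yv]
    · have h2 : ¬ ((t : ℕ) < (j : ℕ)) := fun hc => ht (Fin.lt_def.mpr hc)
      rw [if_neg ht, if_neg h2, if_neg h2, substH_Xv]
  rw [e1, e2] at H
  rw [H]
  rfl

lemma Yv_sub_smul_ne (h : Fin n → kˣ) (j : Fin n) :
    (Yv j - (h j : k) • Xv j : MvPolynomial (Fin n ⊕ Fin n) k) ≠ 0 := by
  intro hc
  have := congrArg (eval (Sum.elim (fun _ => (0 : k)) (fun _ => 1))) hc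
  simp [Yv, Xv] at this

theorem stmt13 (k : Type) [Field k] (n : ℕ) (W : MvPolynomial (Fin n) k)
    (h : Fin n → kˣ) (hsym : IsDiagSym h W)
    (nab : Fin n → MvPolynomial (Fin n ⊕ Fin n) k) (hnab : IsNabla W nab)
    (g : Fin n → Fin n → MvPolynomial (Fin n ⊕ Fin n) k) (hg : GAdapted h W g)
    (j : Fin n) :
    (Yv j - Xv j) * (Xv j - (h j : k) • Xv j) * g j j =
      -((Yv j - Xv j) * substH h (nab j)) +
        (Wbar h W ((j : ℕ)+1) ((j : ℕ)+1) - Wbar h W (j : ℕ) ((j : ℕ)+1)) := by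
  have K := key_nabla W h nab hnab j
  by_cases hj : h j = 1
  · have h1 : ((h j : k)) = 1 := by rw [hj]; rfl
    have hW : Wbar h W (j : ℕ) ((j : ℕ)+1) = Wbar h W (j : ℕ) (j : ℕ) := by
      unfold Wbar
      have e3 : (fun t : Fin n => if (t : ℕ) < (j : ℕ) then (Yv t : MvPolynomial (Fin n ⊕ Fin n) k)
          else if (t : ℕ) < (j : ℕ) + 1 then Xv t else (h t : k) • Xv t) =
        (fun t : Fin n => if (t : ℕ) < (j : ℕ) then (Yv t : MvPolynomial (Fin n ⊕ Fin n) k)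
          else if (t : ℕ) < (j : ℕ) then Xv t else (h t : k) • Xv t) := by
        funext t
        by_cases ht : (t : ℕ) < (j : ℕ)
        · rw [if_pos ht, if_pos ht]
        · rw [if_neg ht, if_neg ht, if_neg ht]
          by_cases ht2 : (t : ℕ) = (j : ℕ)
          · rw [if_pos (by omega), (Fin.ext ht2 : t = j), h1, one_smul]
          · rw [if_neg (by omega)]
      rw [e3]
    rw [h1, one_smul] at K ⊢
    rw [hW]
    linear_combination K
  · have A := hg.2.2.1 j hj
    apply mul_left_cancel₀ (Yv_sub_smul_ne h j)
    linear_combination A + (Yv j - Xv j) * K
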